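/- In a Euclidean conformal triangle datum, suppose in addition that d_ij > 0 and h_ij > 0 on U for all distinct i, j. Then at every point of U, the 3×3 matrix M with entries M_ab = −∂γ_a/∂f_b is symmetric and positive semidefinite, and its kernel is exactly the span of the vector (1,1,1). -/

import Mathlib

set_option maxHeartbeats 1000000

noncomputable section

/-- Partial derivative of `F` in the `k`-th coordinate direction at `x`. -/
def pd (k : Fin 3) (F : (Fin 3 → ℝ) → ℝ) (x : Fin 3 → ℝ) : ℝ :=
  fderiv ℝ F x (Pi.single k 1)

/-- The edge length `ℓ_ij = d_ij + d_ji` determined by the partial edge lengths. -/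
def len (d : Fin 3 → Fin 3 → (Fin 3 → ℝ) → ℝ) (i j : Fin 3) (x : Fin 3 → ℝ) : ℝ :=
  d i j x + d j i x

/-- The index complementary to `i` and `j` in `{0,1,2}` (for `i ≠ j`). -/
def other (i j : Fin 3) : Fin 3 := -(i + j)

/-- The angle `γ_i` of the Euclidean triangle with side lengths `ℓ_ab`, defined by the
Euclidean law of cosines `cos γ_i = (ℓ_ij² + ℓ_ik² − ℓ_jk²)/(2 ℓ_ij ℓ_ik)`. -/
def eGamma (d : Fin 3 → Fin 3 → (Fin 3 → ℝ) → ℝ) (i : Fin 3) (x : Fin 3 → ℝ) : ℝ :=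
  Real.arccos ((len d i (i+1) x ^ 2 + len d i (i+2) x ^ 2 - len d (i+1) (i+2) x ^ 2) /
    (2 * len d i (i+1) x * len d i (i+2) x))

/-- The signed height `h_ij = (d_ik − d_ij cos γ_i)/sin γ_i` from the edge center of edge
`{i,j}` to the dual center of the triangle. -/
def eHeight (d : Fin 3 → Fin 3 → (Fin 3 → ℝ) → ℝ) (i j : Fin 3) (x : Fin 3 → ℝ) : ℝ :=
  (d i (other i j) x - d i j x * Real.cos (eGamma d i x)) / Real.sin (eGamma d i x)

lemma pd_arccos_aux (c b a : (Fin 3 → ℝ) → ℝ) (x : Fin 3 → ℝ) (m : Fin 3)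
    (hc : DifferentiableAt ℝ c x) (hb : DifferentiableAt ℝ b x) (ha : DifferentiableAt ℝ a x)
    (hcx : 0 < c x) (hbx : 0 < b x)
    (hq1 : (c x ^ 2 + b x ^ 2 - a x ^ 2) / (2 * c x * b x) < 1)
    (hq2 : -1 < (c x ^ 2 + b x ^ 2 - a x ^ 2) / (2 * c x * b x)) :
    fderiv ℝ (fun y => Real.arccos ((c y ^ 2 + b y ^ 2 - a y ^ 2) / (2 * c y * b y))) x
        (Pi.single m 1)
      = -(((c x * fderiv ℝ c x (Pi.single m 1) + b x * fderiv ℝ b x (Pi.single m 1)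
            - a x * fderiv ℝ a x (Pi.single m 1)) / (c x * b x)
          - ((c x ^ 2 + b x ^ 2 - a x ^ 2) / (2 * c x * b x))
            * (fderiv ℝ c x (Pi.single m 1) / c x + fderiv ℝ b x (Pi.single m 1) / b x))
         / Real.sqrt (1 - ((c x ^ 2 + b x ^ 2 - a x ^ 2) / (2 * c x * b x)) ^ 2)) := by
  have hden : (2 : ℝ) * c x * b x ≠ 0 := by positivity
  have hfun : (fun y => Real.arccos ((c y ^ 2 + b y ^ 2 - a y ^ 2) / (2 * c y * b y)))
      = fun y => Real.arccos ((c y * c y + b y * b y - a y * a y) * (2 * c y * b y)⁻¹) := by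
    funext y
    rw [div_eq_mul_inv]
    ring_nf
  have hQx : (c x * c x + b x * b x - a x * a x) * (2 * c x * b x)⁻¹
      = (c x ^ 2 + b x ^ 2 - a x ^ 2) / (2 * c x * b x) := by
    rw [div_eq_mul_inv]; ring
  have Hc := hc.hasFDerivAt
  have Hb := hb.hasFDerivAt
  have Ha := ha.hasFDerivAt
  have Hnum : HasFDerivAt (fun y => c y * c y + b y * b y - a y * a y)
      (((c x • fderiv ℝ c x + c x • fderiv ℝ c x) + (b x • fderiv ℝ b x + b x • fderiv ℝ b x))
        - (a x • fderiv ℝ a x + a x • fderiv ℝ a x)) x :=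
    ((Hc.mul Hc).add (Hb.mul Hb)).sub (Ha.mul Ha)
  have Hden : HasFDerivAt (fun y => 2 * c y * b y)
      ((2 * c x) • fderiv ℝ b x + b x • ((2:ℝ) • fderiv ℝ c x)) x :=
    (Hc.const_mul 2).mul Hb
  have Hinv : HasFDerivAt (fun y => (2 * c y * b y)⁻¹)
      ((-((2 * c x * b x) ^ 2)⁻¹) • ((2 * c x) • fderiv ℝ b x + b x • ((2:ℝ) • fderiv ℝ c x))) x := by
    exact (hasDerivAt_inv hden).comp_hasFDerivAt x Hden
  have HQ := Hnum.mul Hinv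
  have Harc := (Real.hasDerivAt_arccos hq2.ne' hq1.ne).comp_hasFDerivAt_of_eq x HQ hQx.symm
  have Harc' : HasFDerivAt
      (fun y => Real.arccos ((c y * c y + b y * b y - a y * a y) * (2 * c y * b y)⁻¹))
      (-(1 / Real.sqrt (1 - ((c x ^ 2 + b x ^ 2 - a x ^ 2) / (2 * c x * b x)) ^ 2)) •
        ((c x * c x + b x * b x - a x * a x) •
            (-((2 * c x * b x) ^ 2)⁻¹ • ((2 * c x) • fderiv ℝ b x + b x • ((2:ℝ) • fderiv ℝ c x))) +
          (2 * c x * b x)⁻¹ •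
            (((c x • fderiv ℝ c x + c x • fderiv ℝ c x) + (b x • fderiv ℝ b x + b x • fderiv ℝ b x)) -
              (a x • fderiv ℝ a x + a x • fderiv ℝ a x)))) x := Harc
  rw [hfun, Harc'.fderiv]
  simp only [ContinuousLinearMap.coe_smul', Pi.smul_apply, ContinuousLinearMap.add_apply,
    ContinuousLinearMap.coe_sub', Pi.sub_apply, ContinuousLinearMap.smul_apply, smul_eq_mul]
  have hspos : 0 < Real.sqrt (1 - ((c x ^ 2 + b x ^ 2 - a x ^ 2) / (2 * c x * b x)) ^ 2) := by
    apply Real.sqrt_pos.2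
    nlinarith
  generalize hS : Real.sqrt (1 - ((c x ^ 2 + b x ^ 2 - a x ^ 2) / (2 * c x * b x)) ^ 2) = S at hspos ⊢
  field_simp
  ring


lemma entry_diag (c b a pc pb q s : ℝ) (hc : c ≠ 0) (hb : b ≠ 0) (hs : s ≠ 0) :
    -(-(((c*pc + b*pb - a*0) / (c*b) - q*(pc/c + pb/b))/s))
      = (pb - pc*q)/s/c + (pc - pb*q)/s/b := by
  field_simp
  ring

lemma entry_off (c b a pc pb pa t1 t2 q s : ℝ) (hc : c ≠ 0) (hb : b ≠ 0) (hs : s ≠ 0)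
    (hkey : q * (b*pc + c*pb + b*t2) = c*pc + b*pb - a*pa + b*t1) :
    -(-(((c*pc + b*pb - a*pa) / (c*b) - q*(pc/c + pb/b))/s)) = -((t1 - t2*q)/s/c) := by
  rw [show c*pc + b*pb - a*pa = q*(b*pc + c*pb + b*t2) - b*t1 by linarith]
  field_simp
  ring

lemma entry_off' (c b a pc pb pa t1 t2 q s : ℝ) (hc : c ≠ 0) (hb : b ≠ 0) (hs : s ≠ 0)
    (hkey : q * (b*pc + c*pb + c*t2) = c*pc + b*pb - a*pa + c*t1) :
    -(-(((c*pc + b*pb - a*pa) / (c*b) - q*(pc/c + pb/b))/s)) = -((t1 - t2*q)/s/b) := by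
  rw [show c*pc + b*pb - a*pa = q*(b*pc + c*pb + c*t2) - c*t1 by linarith]
  field_simp
  ring

lemma cross01 (l01 l02 l12 q0 q1 s0 s1 : ℝ) (h01 : 0 < l01) (h02 : 0 < l02) (h12 : 0 < l12)
    (hs0 : 0 ≤ s0) (hs1 : 0 ≤ s1)
    (hs0sq : s0^2 = 1 - q0^2) (hs1sq : s1^2 = 1 - q1^2)
    (hq0 : q0 * (2*l01*l02) = l01^2+l02^2-l12^2)
    (hq1 : q1 * (2*l12*l01) = l12^2+l01^2-l02^2) :
    l02 * s0 = l12 * s1 := by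
  have hsq : (2*l01*(l02*s0))^2 = (2*l01*(l12*s1))^2 := by
    have e0 : (2*l01*(l02*s0))^2 = (2*l01*l02)^2 * s0^2 := by ring
    have e1 : (2*l01*(l12*s1))^2 = (2*l12*l01)^2 * s1^2 := by ring
    rw [e0, e1, hs0sq, hs1sq]
    linear_combination (-(q0*(2*l01*l02) + (l01^2+l02^2-l12^2)))*hq0
      + (q1*(2*l12*l01) + (l12^2+l01^2-l02^2))*hq1
  have h := (sq_eq_sq₀ (by positivity) (by positivity)).1 hsq
  exact mul_left_cancel₀ (by positivity) h

lemma lap3 (A B C : ℝ) (hA : 0 < A) (hB : 0 < B) (hC : 0 < C)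
    (N : Matrix (Fin 3) (Fin 3) ℝ)
    (e00 : N 0 0 = A + B) (e01 : N 0 1 = -A) (e02 : N 0 2 = -B)
    (e10 : N 1 0 = -A) (e11 : N 1 1 = A + C) (e12 : N 1 2 = -C)
    (e20 : N 2 0 = -B) (e21 : N 2 1 = -C) (e22 : N 2 2 = B + C) :
    N.IsSymm ∧ N.PosSemidef ∧
      (∀ v : Fin 3 → ℝ, N.mulVec v = 0 ↔ ∃ t : ℝ, v = fun _ => t) := by
  have hsym : N.IsSymm := by
    rw [Matrix.IsSymm]
    ext i j
    fin_cases i <;> fin_cases j <;>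
      simp [Matrix.transpose_apply, e00, e01, e02, e10, e11, e12, e20, e21, e22]
  refine ⟨hsym, Matrix.posSemidef_iff_dotProduct_mulVec.2 ⟨?_, ?_⟩, ?_⟩
  · rw [Matrix.IsHermitian, Matrix.conjTranspose_eq_transpose_of_trivial]
    exact hsym
  · intro v
    simp only [dotProduct, Matrix.mulVec, Fin.sum_univ_three, Pi.star_apply,
      star_trivial, e00, e01, e02, e10, e11, e12, e20, e21, e22]
    nlinarith [mul_nonneg hA.le (sq_nonneg (v 0 - v 1)), mul_nonneg hB.le (sq_nonneg (v 0 - v 2)),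
      mul_nonneg hC.le (sq_nonneg (v 1 - v 2))]
  · intro v
    constructor
    · intro hv
      have h0 := congrFun hv 0
      have h1 := congrFun hv 1
      have h2 := congrFun hv 2
      simp only [Matrix.mulVec, dotProduct, Fin.sum_univ_three, Pi.zero_apply,
        e00, e01, e02, e10, e11, e12, e20, e21, e22] at h0 h1 h2
      have key : A * (v 0 - v 1) ^ 2 + B * (v 0 - v 2) ^ 2 + C * (v 1 - v 2) ^ 2 = 0 := by
        linear_combination v 0 * h0 + v 1 * h1 + v 2 * h2
      have z01 : A * (v 0 - v 1) ^ 2 = 0 := by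
        have := mul_nonneg hA.le (sq_nonneg (v 0 - v 1))
        have := mul_nonneg hB.le (sq_nonneg (v 0 - v 2))
        have := mul_nonneg hC.le (sq_nonneg (v 1 - v 2))
        linarith
      have z12 : C * (v 1 - v 2) ^ 2 = 0 := by
        have := mul_nonneg hA.le (sq_nonneg (v 0 - v 1))
        have := mul_nonneg hB.le (sq_nonneg (v 0 - v 2))
        have := mul_nonneg hC.le (sq_nonneg (v 1 - v 2))
        linarith
      have hv01 : v 0 = v 1 := by
        have h := (mul_eq_zero.1 z01).resolve_left hA.ne'
        have := pow_eq_zero_iff (n := 2) (by norm_num) |>.1 h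
        linarith [sub_eq_zero.1 this]
      have hv12 : v 1 = v 2 := by
        have h := (mul_eq_zero.1 z12).resolve_left hC.ne'
        have := pow_eq_zero_iff (n := 2) (by norm_num) |>.1 h
        linarith [sub_eq_zero.1 this]
      refine ⟨v 0, funext fun i => ?_⟩
      fin_cases i
      · rfl
      · exact hv01.symm
      · exact (hv01.trans hv12).symm
    · rintro ⟨t, rfl⟩
      funext i
      fin_cases i <;>
        simp [Matrix.mulVec, dotProduct, Fin.sum_univ_three,
          e00, e01, e02, e10, e11, e12, e20, e21, e22] <;> ring

/-- Theorem 2.4 (convexity in the Euclidean case): if all `d_ij > 0` and `h_ij > 0`, the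
matrix `M_ab = −∂γ_a/∂f_b` is symmetric positive semidefinite with kernel spanned by
`(1,1,1)`. -/
theorem euclidean_angle_variation_convexity
    (U : Set (Fin 3 → ℝ)) (hUopen : IsOpen U)
    (d : Fin 3 → Fin 3 → (Fin 3 → ℝ) → ℝ)
    (hsmooth : ∀ i j : Fin 3, i ≠ j → ContDiffOn ℝ (⊤ : ℕ∞) (d i j) U)
    (hdep : ∀ i j k : Fin 3, i ≠ j → k ≠ i → k ≠ j → ∀ x ∈ U, pd k (d i j) x = 0)
    (hpos : ∀ i j : Fin 3, i ≠ j → ∀ x ∈ U, 0 < len d i j x)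
    (htri : ∀ i j k : Fin 3, i ≠ j → j ≠ k → i ≠ k → ∀ x ∈ U,
      len d i j x < len d i k x + len d k j x)
    (hcompat : ∀ x ∈ U,
      d 0 1 x ^ 2 + d 1 2 x ^ 2 + d 2 0 x ^ 2
        = d 1 0 x ^ 2 + d 2 1 x ^ 2 + d 0 2 x ^ 2)
    (hconf : ∀ i j : Fin 3, i ≠ j → ∀ x ∈ U, pd i (len d i j) x = d i j x)
    (hd : ∀ i j : Fin 3, i ≠ j → ∀ x ∈ U, 0 < d i j x)
    (hh : ∀ i j : Fin 3, i ≠ j → ∀ x ∈ U, 0 < eHeight d i j x) :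
    ∀ x ∈ U,
      (Matrix.of fun a b : Fin 3 => -pd b (eGamma d a) x).IsSymm ∧
      (Matrix.of fun a b : Fin 3 => -pd b (eGamma d a) x).PosSemidef ∧
      (∀ v : Fin 3 → ℝ,
        (Matrix.of fun a b : Fin 3 => -pd b (eGamma d a) x).mulVec v = 0 ↔
          ∃ t : ℝ, v = fun _ => t) := by
  intro x hx
  -- differentiability
  have hdiffd : ∀ i j : Fin 3, i ≠ j → DifferentiableAt ℝ (d i j) x := fun i j hij =>
    ((hsmooth i j hij).contDiffAt (hUopen.mem_nhds hx)).differentiableAt (by simp)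
  have hdiffl : ∀ i j : Fin 3, i ≠ j → DifferentiableAt ℝ (len d i j) x := fun i j hij =>
    (hdiffd i j hij).add (hdiffd j i hij.symm)
  have lswap : ∀ i j : Fin 3, len d i j = len d j i := fun i j => funext fun y => add_comm _ _
  -- pd of len
  have pdi : ∀ i j : Fin 3, i ≠ j → pd i (len d i j) x = d i j x := fun i j h => hconf i j h x hx
  have pdj : ∀ i j : Fin 3, i ≠ j → pd j (len d i j) x = d j i x := by
    intro i j h; rw [lswap]; exact hconf j i h.symm x hx
  have pdk : ∀ i j k : Fin 3, i ≠ j → k ≠ i → k ≠ j → pd k (len d i j) x = 0 := by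
    intro i j k hij hki hkj
    have e : pd k (len d i j) x = pd k (d i j) x + pd k (d j i) x := by
      unfold pd
      rw [show len d i j = fun y => d i j y + d j i y from rfl,
        fderiv_fun_add (hdiffd i j hij) (hdiffd j i hij.symm)]
      simp
    rw [e, hdep i j k hij hki hkj x hx, hdep j i k hij.symm hkj hki x hx, add_zero]
  -- the nine directional derivatives of the three lengths
  have a01m0 : pd 0 (len d 0 1) x = d 0 1 x := pdi 0 1 (by decide)
  have a01m1 : pd 1 (len d 0 1) x = d 1 0 x := pdj 0 1 (by decide)
  have a01m2 : pd 2 (len d 0 1) x = 0 := pdk 0 1 2 (by decide) (by decide) (by decide)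
  have a02m0 : pd 0 (len d 0 2) x = d 0 2 x := pdi 0 2 (by decide)
  have a02m1 : pd 1 (len d 0 2) x = 0 := pdk 0 2 1 (by decide) (by decide) (by decide)
  have a02m2 : pd 2 (len d 0 2) x = d 2 0 x := pdj 0 2 (by decide)
  have a12m0 : pd 0 (len d 1 2) x = 0 := pdk 1 2 0 (by decide) (by decide) (by decide)
  have a12m1 : pd 1 (len d 1 2) x = d 1 2 x := pdi 1 2 (by decide)
  have a12m2 : pd 2 (len d 1 2) x = d 2 1 x := pdj 1 2 (by decide)
  -- positivity and triangle inequalities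
  have L01 := hpos 0 1 (by decide) x hx
  have L02 := hpos 0 2 (by decide) x hx
  have L12 := hpos 1 2 (by decide) x hx
  have T0 : len d 1 2 x < len d 0 1 x + len d 0 2 x := by
    have := htri 1 2 0 (by decide) (by decide) (by decide) x hx
    rwa [lswap 1 0] at this
  have T1 : len d 0 1 x < len d 0 2 x + len d 1 2 x := by
    have := htri 0 1 2 (by decide) (by decide) (by decide) x hx
    rwa [lswap 2 1] at this
  have T2 : len d 0 2 x < len d 0 1 x + len d 1 2 x :=
    htri 0 2 1 (by decide) (by decide) (by decide) x hx
  -- bounds on the three cosines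
  have b0a : (len d 0 1 x ^ 2 + len d 0 2 x ^ 2 - len d 1 2 x ^ 2)
      / (2 * len d 0 1 x * len d 0 2 x) < 1 := by
    rw [div_lt_one (by nlinarith : (0:ℝ) < 2 * len d 0 1 x * len d 0 2 x)]
    nlinarith
  have b0b : -1 < (len d 0 1 x ^ 2 + len d 0 2 x ^ 2 - len d 1 2 x ^ 2)
      / (2 * len d 0 1 x * len d 0 2 x) := by
    rw [lt_div_iff₀ (by nlinarith : (0:ℝ) < 2 * len d 0 1 x * len d 0 2 x)]
    nlinarith
  have b1a : (len d 1 2 x ^ 2 + len d 0 1 x ^ 2 - len d 0 2 x ^ 2)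
      / (2 * len d 1 2 x * len d 0 1 x) < 1 := by
    rw [div_lt_one (by nlinarith : (0:ℝ) < 2 * len d 1 2 x * len d 0 1 x)]
    nlinarith
  have b1b : -1 < (len d 1 2 x ^ 2 + len d 0 1 x ^ 2 - len d 0 2 x ^ 2)
      / (2 * len d 1 2 x * len d 0 1 x) := by
    rw [lt_div_iff₀ (by nlinarith : (0:ℝ) < 2 * len d 1 2 x * len d 0 1 x)]
    nlinarith
  have b2a : (len d 0 2 x ^ 2 + len d 1 2 x ^ 2 - len d 0 1 x ^ 2)
      / (2 * len d 0 2 x * len d 1 2 x) < 1 := by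
    rw [div_lt_one (by nlinarith : (0:ℝ) < 2 * len d 0 2 x * len d 1 2 x)]
    nlinarith
  have b2b : -1 < (len d 0 2 x ^ 2 + len d 1 2 x ^ 2 - len d 0 1 x ^ 2)
      / (2 * len d 0 2 x * len d 1 2 x) := by
    rw [lt_div_iff₀ (by nlinarith : (0:ℝ) < 2 * len d 0 2 x * len d 1 2 x)]
    nlinarith
  -- the three gamma functions in normalized form
  have hg0 : eGamma d 0 = fun y => Real.arccos ((len d 0 1 y ^ 2 + len d 0 2 y ^ 2
      - len d 1 2 y ^ 2) / (2 * len d 0 1 y * len d 0 2 y)) := rfl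
  have hg1 : eGamma d 1 = fun y => Real.arccos ((len d 1 2 y ^ 2 + len d 0 1 y ^ 2
      - len d 0 2 y ^ 2) / (2 * len d 1 2 y * len d 0 1 y)) := by
    rw [show eGamma d 1 = fun y => Real.arccos ((len d 1 2 y ^ 2 + len d 1 0 y ^ 2
      - len d 2 0 y ^ 2) / (2 * len d 1 2 y * len d 1 0 y)) from rfl, lswap 1 0, lswap 2 0]
  have hg2 : eGamma d 2 = fun y => Real.arccos ((len d 0 2 y ^ 2 + len d 1 2 y ^ 2
      - len d 0 1 y ^ 2) / (2 * len d 0 2 y * len d 1 2 y)) := by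
    rw [show eGamma d 2 = fun y => Real.arccos ((len d 2 0 y ^ 2 + len d 2 1 y ^ 2
      - len d 0 1 y ^ 2) / (2 * len d 2 0 y * len d 2 1 y)) from rfl, lswap 2 0, lswap 2 1]
  -- the rows of derivatives
  have row0 : ∀ m, pd m (eGamma d 0) x =
      -(((len d 0 1 x * pd m (len d 0 1) x + len d 0 2 x * pd m (len d 0 2) x
            - len d 1 2 x * pd m (len d 1 2) x) / (len d 0 1 x * len d 0 2 x)
          - ((len d 0 1 x ^ 2 + len d 0 2 x ^ 2 - len d 1 2 x ^ 2)
              / (2 * len d 0 1 x * len d 0 2 x))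
            * (pd m (len d 0 1) x / len d 0 1 x + pd m (len d 0 2) x / len d 0 2 x))
         / Real.sqrt (1 - ((len d 0 1 x ^ 2 + len d 0 2 x ^ 2 - len d 1 2 x ^ 2)
              / (2 * len d 0 1 x * len d 0 2 x)) ^ 2)) := by
    intro m
    rw [pd, hg0]
    exact pd_arccos_aux _ _ _ x m (hdiffl 0 1 (by decide)) (hdiffl 0 2 (by decide))
      (hdiffl 1 2 (by decide)) L01 L02 b0a b0b
  have row1 : ∀ m, pd m (eGamma d 1) x =
      -(((len d 1 2 x * pd m (len d 1 2) x + len d 0 1 x * pd m (len d 0 1) x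
            - len d 0 2 x * pd m (len d 0 2) x) / (len d 1 2 x * len d 0 1 x)
          - ((len d 1 2 x ^ 2 + len d 0 1 x ^ 2 - len d 0 2 x ^ 2)
              / (2 * len d 1 2 x * len d 0 1 x))
            * (pd m (len d 1 2) x / len d 1 2 x + pd m (len d 0 1) x / len d 0 1 x))
         / Real.sqrt (1 - ((len d 1 2 x ^ 2 + len d 0 1 x ^ 2 - len d 0 2 x ^ 2)
              / (2 * len d 1 2 x * len d 0 1 x)) ^ 2)) := by
    intro m
    rw [pd, hg1]
    exact pd_arccos_aux _ _ _ x m (hdiffl 1 2 (by decide)) (hdiffl 0 1 (by decide))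
      (hdiffl 0 2 (by decide)) L12 L01 b1a b1b
  have row2 : ∀ m, pd m (eGamma d 2) x =
      -(((len d 0 2 x * pd m (len d 0 2) x + len d 1 2 x * pd m (len d 1 2) x
            - len d 0 1 x * pd m (len d 0 1) x) / (len d 0 2 x * len d 1 2 x)
          - ((len d 0 2 x ^ 2 + len d 1 2 x ^ 2 - len d 0 1 x ^ 2)
              / (2 * len d 0 2 x * len d 1 2 x))
            * (pd m (len d 0 2) x / len d 0 2 x + pd m (len d 1 2) x / len d 1 2 x))
         / Real.sqrt (1 - ((len d 0 2 x ^ 2 + len d 1 2 x ^ 2 - len d 0 1 x ^ 2)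
              / (2 * len d 0 2 x * len d 1 2 x)) ^ 2)) := by
    intro m
    rw [pd, hg2]
    exact pd_arccos_aux _ _ _ x m (hdiffl 0 2 (by decide)) (hdiffl 1 2 (by decide))
      (hdiffl 0 1 (by decide)) L02 L12 b2a b2b
  -- cosine and sine values
  have hco0 : Real.cos (eGamma d 0 x) = (len d 0 1 x ^ 2 + len d 0 2 x ^ 2 - len d 1 2 x ^ 2)
      / (2 * len d 0 1 x * len d 0 2 x) := by
    rw [congrFun hg0 x]; exact Real.cos_arccos b0b.le b0a.le
  have hsi0 : Real.sin (eGamma d 0 x) = Real.sqrt (1 - ((len d 0 1 x ^ 2 + len d 0 2 x ^ 2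
      - len d 1 2 x ^ 2) / (2 * len d 0 1 x * len d 0 2 x)) ^ 2) := by
    rw [congrFun hg0 x]; exact Real.sin_arccos _
  have hco1 : Real.cos (eGamma d 1 x) = (len d 1 2 x ^ 2 + len d 0 1 x ^ 2 - len d 0 2 x ^ 2)
      / (2 * len d 1 2 x * len d 0 1 x) := by
    rw [congrFun hg1 x]; exact Real.cos_arccos b1b.le b1a.le
  have hsi1 : Real.sin (eGamma d 1 x) = Real.sqrt (1 - ((len d 1 2 x ^ 2 + len d 0 1 x ^ 2
      - len d 0 2 x ^ 2) / (2 * len d 1 2 x * len d 0 1 x)) ^ 2) := by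
    rw [congrFun hg1 x]; exact Real.sin_arccos _
  have hco2 : Real.cos (eGamma d 2 x) = (len d 0 2 x ^ 2 + len d 1 2 x ^ 2 - len d 0 1 x ^ 2)
      / (2 * len d 0 2 x * len d 1 2 x) := by
    rw [congrFun hg2 x]; exact Real.cos_arccos b2b.le b2a.le
  have hsi2 : Real.sin (eGamma d 2 x) = Real.sqrt (1 - ((len d 0 2 x ^ 2 + len d 1 2 x ^ 2
      - len d 0 1 x ^ 2) / (2 * len d 0 2 x * len d 1 2 x)) ^ 2) := by
    rw [congrFun hg2 x]; exact Real.sin_arccos _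
  -- heights
  have he01 : eHeight d 0 1 x = (d 0 2 x - d 0 1 x * Real.cos (eGamma d 0 x))
      / Real.sin (eGamma d 0 x) := rfl
  have he02 : eHeight d 0 2 x = (d 0 1 x - d 0 2 x * Real.cos (eGamma d 0 x))
      / Real.sin (eGamma d 0 x) := rfl
  have he10 : eHeight d 1 0 x = (d 1 2 x - d 1 0 x * Real.cos (eGamma d 1 x))
      / Real.sin (eGamma d 1 x) := rfl
  have he12 : eHeight d 1 2 x = (d 1 0 x - d 1 2 x * Real.cos (eGamma d 1 x))
      / Real.sin (eGamma d 1 x) := rfl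
  have he20 : eHeight d 2 0 x = (d 2 1 x - d 2 0 x * Real.cos (eGamma d 2 x))
      / Real.sin (eGamma d 2 x) := rfl
  have he21 : eHeight d 2 1 x = (d 2 0 x - d 2 1 x * Real.cos (eGamma d 2 x))
      / Real.sin (eGamma d 2 x) := rfl
  -- compatibility and height positivity
  have hcom := hcompat x hx
  have HH01 := hh 0 1 (by decide) x hx
  have HH02 := hh 0 2 (by decide) x hx
  have HH12 := hh 1 2 (by decide) x hx
  rw [he01, hco0, hsi0] at HH01
  rw [he02, hco0, hsi0] at HH02
  rw [he12, hco1, hsi1] at HH12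
  -- pass to point values
  have hlenv : ∀ i j : Fin 3, len d i j x = d i j x + d j i x := fun i j => rfl
  simp only [hlenv] at row0 row1 row2 b0a b0b b1a b1b b2a b2b L01 L02 L12 HH01 HH02 HH12
  set p01 := d 0 1 x with hp01
  set p10 := d 1 0 x with hp10
  set p02 := d 0 2 x with hp02
  set p20 := d 2 0 x with hp20
  set p12 := d 1 2 x with hp12
  set p21 := d 2 1 x with hp21
  set q0 := ((p01 + p10) ^ 2 + (p02 + p20) ^ 2 - (p12 + p21) ^ 2)
      / (2 * (p01 + p10) * (p02 + p20)) with hq0d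
  set q1 := ((p12 + p21) ^ 2 + (p01 + p10) ^ 2 - (p02 + p20) ^ 2)
      / (2 * (p12 + p21) * (p01 + p10)) with hq1d
  set q2 := ((p02 + p20) ^ 2 + (p12 + p21) ^ 2 - (p01 + p10) ^ 2)
      / (2 * (p02 + p20) * (p12 + p21)) with hq2d
  set s0 := Real.sqrt (1 - q0 ^ 2) with hs0d
  set s1 := Real.sqrt (1 - q1 ^ 2) with hs1d
  set s2 := Real.sqrt (1 - q2 ^ 2) with hs2d
  clear_value p01 p10 p02 p20 p12 p21 q0 q1 q2 s0 s1 s2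
  -- defining identities
  have hq0 : q0 * (2 * (p01 + p10) * (p02 + p20))
      = (p01 + p10) ^ 2 + (p02 + p20) ^ 2 - (p12 + p21) ^ 2 := by
    rw [hq0d]
    exact div_mul_cancel₀ _ (ne_of_gt (mul_pos (mul_pos (by norm_num) L01) L02))
  have hq1 : q1 * (2 * (p12 + p21) * (p01 + p10))
      = (p12 + p21) ^ 2 + (p01 + p10) ^ 2 - (p02 + p20) ^ 2 := by
    rw [hq1d]
    exact div_mul_cancel₀ _ (ne_of_gt (mul_pos (mul_pos (by norm_num) L12) L01))
  have hq2 : q2 * (2 * (p02 + p20) * (p12 + p21))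
      = (p02 + p20) ^ 2 + (p12 + p21) ^ 2 - (p01 + p10) ^ 2 := by
    rw [hq2d]
    exact div_mul_cancel₀ _ (ne_of_gt (mul_pos (mul_pos (by norm_num) L02) L12))
  have hs0sq : s0 ^ 2 = 1 - q0 ^ 2 := by
    rw [hs0d]; exact Real.sq_sqrt (by nlinarith only [b0a, b0b, sq_nonneg (q0), mul_pos (sub_pos.2 b0a) (by linarith only [b0b] : (0:ℝ) < 1 + q0)])
  have hs0pos : 0 < s0 := by
    rw [hs0d]; exact Real.sqrt_pos.2 (by nlinarith only [b0a, b0b, sq_nonneg (q0), mul_pos (sub_pos.2 b0a) (by linarith only [b0b] : (0:ℝ) < 1 + q0)])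
  have hs1sq : s1 ^ 2 = 1 - q1 ^ 2 := by
    rw [hs1d]; exact Real.sq_sqrt (by nlinarith only [b1a, b1b, sq_nonneg (q1), mul_pos (sub_pos.2 b1a) (by linarith only [b1b] : (0:ℝ) < 1 + q1)])
  have hs1pos : 0 < s1 := by
    rw [hs1d]; exact Real.sqrt_pos.2 (by nlinarith only [b1a, b1b, sq_nonneg (q1), mul_pos (sub_pos.2 b1a) (by linarith only [b1b] : (0:ℝ) < 1 + q1)])
  have hs2sq : s2 ^ 2 = 1 - q2 ^ 2 := by
    rw [hs2d]; exact Real.sq_sqrt (by nlinarith only [b2a, b2b, sq_nonneg (q2), mul_pos (sub_pos.2 b2a) (by linarith only [b2b] : (0:ℝ) < 1 + q2)])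
  have hs2pos : 0 < s2 := by
    rw [hs2d]; exact Real.sqrt_pos.2 (by nlinarith only [b2a, b2b, sq_nonneg (q2), mul_pos (sub_pos.2 b2a) (by linarith only [b2b] : (0:ℝ) < 1 + q2)])
  have ns0 : s0 ≠ 0 := ne_of_gt hs0pos
  have ns1 : s1 ≠ 0 := ne_of_gt hs1pos
  have ns2 : s2 ≠ 0 := ne_of_gt hs2pos
  have n01 : (p01 + p10) ≠ 0 := ne_of_gt L01
  have n02 : (p02 + p20) ≠ 0 := ne_of_gt L02
  have n12 : (p12 + p21) ≠ 0 := ne_of_gt L12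
  -- key linear identities (using the compatibility)
  have key0 : q0 * ((p01+p10)*(p02+p20))
      = (p01+p10)*p10 + (p02+p20)*p02 - (p12+p21)*p12 := by
    linear_combination hq0 / 2 + hcom / 2
  have key0' : q0 * ((p01+p10)*(p02+p20))
      = (p01+p10)*p01 + (p02+p20)*p20 - (p12+p21)*p21 := by
    linear_combination hq0 / 2 - hcom / 2
  have key1 : q1 * ((p12+p21)*(p01+p10))
      = (p12+p21)*p21 + (p01+p10)*p10 - (p02+p20)*p20 := by
    linear_combination hq1 / 2 + hcom / 2
  have key1' : q1 * ((p12+p21)*(p01+p10))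
      = (p12+p21)*p12 + (p01+p10)*p01 - (p02+p20)*p02 := by
    linear_combination hq1 / 2 - hcom / 2
  have key2 : q2 * ((p02+p20)*(p12+p21))
      = (p02+p20)*p02 + (p12+p21)*p21 - (p01+p10)*p01 := by
    linear_combination hq2 / 2 + hcom / 2
  have key2' : q2 * ((p02+p20)*(p12+p21))
      = (p02+p20)*p20 + (p12+p21)*p12 - (p01+p10)*p10 := by
    linear_combination hq2 / 2 - hcom / 2
  -- cross sine identities
  have c01 : (p02+p20) * s0 = (p12+p21) * s1 :=
    cross01 (p01+p10) (p02+p20) (p12+p21) q0 q1 s0 s1 L01 L02 L12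
      hs0pos.le hs1pos.le hs0sq hs1sq hq0 hq1
  have c02 : (p01+p10) * s0 = (p12+p21) * s2 :=
    cross01 (p02+p20) (p01+p10) (p12+p21) q0 q2 s0 s2 L02 L01 L12
      hs0pos.le hs2pos.le hs0sq hs2sq (by linear_combination hq0) (by linear_combination hq2)
  have c12 : (p01+p10) * s1 = (p02+p20) * s2 :=
    cross01 (p12+p21) (p01+p10) (p02+p20) q1 q2 s1 s2 L12 L01 L02
      hs1pos.le hs2pos.le hs1sq hs2sq hq1 hq2
  -- cross polynomial identities
  have stepA : (p12 - p10*q1)*((p12+p21)*(p01+p10))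
      = (p02 - p01*q0)*((p01+p10)*(p02+p20)) := by
    linear_combination (-p10)*key1 + p01*key0 + p10*hcom
  have stepB : (p21 - p20*q2)*((p02+p20)*(p12+p21))
      = (p01 - p02*q0)*((p02+p20)*(p01+p10)) := by
    linear_combination (-p20)*key2' + p02*key0' + (-p20)*hcom
  have stepC : (p20 - p21*q2)*((p12+p21)*(p02+p20))
      = (p10 - p12*q1)*((p12+p21)*(p01+p10)) := by
    linear_combination (-p21)*key2' + p12*key1
  -- height symmetry
  have crA : (p12 - p10*q1)/s1 = (p02 - p01*q0)/s0 := by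
    rw [div_eq_div_iff ns1 ns0]
    apply mul_left_cancel₀ (ne_of_gt (mul_pos L12 L01))
    linear_combination s0 * stepA + (p02 - p01*q0)*(p01+p10)*c01
  have crB : (p21 - p20*q2)/s2 = (p01 - p02*q0)/s0 := by
    rw [div_eq_div_iff ns2 ns0]
    apply mul_left_cancel₀ (ne_of_gt (mul_pos L02 L12))
    linear_combination s0 * stepB + (p01 - p02*q0)*(p02+p20)*c02
  have crC : (p20 - p21*q2)/s2 = (p10 - p12*q1)/s1 := by
    rw [div_eq_div_iff ns2 ns1]
    apply mul_left_cancel₀ (ne_of_gt (mul_pos L12 L02))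
    linear_combination s1 * stepC + (p10 - p12*q1)*(p12+p21)*c12
  -- the nine matrix entries
  have E00 : -pd 0 (eGamma d 0) x
      = (p02 - p01*q0)/s0/(p01+p10) + (p01 - p02*q0)/s0/(p02+p20) := by
    rw [row0 0, a01m0, a02m0, a12m0]
    exact entry_diag (p01+p10) (p02+p20) (p12+p21) p01 p02 q0 s0 n01 n02 ns0
  have E01 : -pd 1 (eGamma d 0) x = -((p02 - p01*q0)/s0/(p01+p10)) := by
    rw [row0 1, a01m1, a02m1, a12m1]
    exact entry_off (p01+p10) (p02+p20) (p12+p21) p10 0 p12 p02 p01 q0 s0 n01 n02 ns0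
      (by linear_combination key0)
  have E02 : -pd 2 (eGamma d 0) x = -((p01 - p02*q0)/s0/(p02+p20)) := by
    rw [row0 2, a01m2, a02m2, a12m2]
    exact entry_off' (p01+p10) (p02+p20) (p12+p21) 0 p20 p21 p01 p02 q0 s0 n01 n02 ns0
      (by linear_combination key0')
  have E10 : -pd 0 (eGamma d 1) x = -((p12 - p10*q1)/s1/(p01+p10)) := by
    rw [row1 0, a12m0, a01m0, a02m0]
    exact entry_off' (p12+p21) (p01+p10) (p02+p20) 0 p01 p02 p12 p10 q1 s1 n12 n01 ns1
      (by linear_combination key1')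
  have E11 : -pd 1 (eGamma d 1) x
      = (p10 - p12*q1)/s1/(p12+p21) + (p12 - p10*q1)/s1/(p01+p10) := by
    rw [row1 1, a12m1, a01m1, a02m1]
    exact entry_diag (p12+p21) (p01+p10) (p02+p20) p12 p10 q1 s1 n12 n01 ns1
  have E12 : -pd 2 (eGamma d 1) x = -((p10 - p12*q1)/s1/(p12+p21)) := by
    rw [row1 2, a12m2, a01m2, a02m2]
    exact entry_off (p12+p21) (p01+p10) (p02+p20) p21 0 p20 p10 p12 q1 s1 n12 n01 ns1
      (by linear_combination key1)
  have E20 : -pd 0 (eGamma d 2) x = -((p21 - p20*q2)/s2/(p02+p20)) := by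
    rw [row2 0, a02m0, a12m0, a01m0]
    exact entry_off (p02+p20) (p12+p21) (p01+p10) p02 0 p01 p21 p20 q2 s2 n02 n12 ns2
      (by linear_combination key2)
  have E21 : -pd 1 (eGamma d 2) x = -((p20 - p21*q2)/s2/(p12+p21)) := by
    rw [row2 1, a02m1, a12m1, a01m1]
    exact entry_off' (p02+p20) (p12+p21) (p01+p10) 0 p12 p10 p20 p21 q2 s2 n02 n12 ns2
      (by linear_combination key2')
  have E22 : -pd 2 (eGamma d 2) x
      = (p21 - p20*q2)/s2/(p02+p20) + (p20 - p21*q2)/s2/(p12+p21) := by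
    rw [row2 2, a02m2, a12m2, a01m2]
    exact entry_diag (p02+p20) (p12+p21) (p01+p10) p20 p21 q2 s2 n02 n12 ns2
  -- assemble via lap3
  have HA : 0 < (p02 - p01*q0)/s0/(p01+p10) := div_pos HH01 L01
  have HB : 0 < (p01 - p02*q0)/s0/(p02+p20) := div_pos HH02 L02
  have HC : 0 < (p10 - p12*q1)/s1/(p12+p21) := div_pos HH12 L12
  rw [crA] at E10 E11
  rw [crB] at E20
  rw [crC] at E21
  have E11' : -pd 1 (eGamma d 1) x
      = (p02 - p01*q0)/s0/(p01+p10) + (p10 - p12*q1)/s1/(p12+p21) := by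
    rw [E11]; ring
  have E22' : -pd 2 (eGamma d 2) x
      = (p01 - p02*q0)/s0/(p02+p20) + (p10 - p12*q1)/s1/(p12+p21) := by
    rw [E22, crB, crC]
  exact lap3 _ _ _ HA HB HC (Matrix.of fun a b : Fin 3 => -pd b (eGamma d a) x)
    E00 E01 E02 E10 E11' E12 E20 E21 E22'
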